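/- arXiv:2205.11466 — 2 statements merged into one kernel-verified Lean document; each statement's English description precedes it below -/
import Mathlib

section
/- Let d ≥ m ≥ 0 and let g be a binary form of degree m and u₁', u₂' coprime binary forms of degree d − m such that g and u₁'² + u₂'² are coprime. Set u₁ = g·u₁' and u₂ = g·u₂'. Then for every binary form p of degree 2d that is a sum of squares of binary forms of degree d, there exist binary forms v₁, v₂ of degree d and a finite family of pairs (w₁⁽ⁱ⁾, w₂⁽ⁱ⁾) of binary forms of degree d with u₁w₁⁽ⁱ⁾ + u₂w₂⁽ⁱ⁾ = 0 for each i, such that p = u₁v₁ + u₂v₂ + ∑ᵢ ((w₁⁽ⁱ⁾)² + (w₂⁽ⁱ⁾)²). -/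
/-!
Write `S = u₁'² + u₂'²`; it suffices to treat a single square `t²` with `t` of degree `d`.
Over `ℂ` the forms `F = u₁' + i u₂'` and `g` are coprime: a common factor `w` yields the real
form `w w̄`, which divides both `S = F F̄` and `g²`. Since `deg F + deg g = d`, a dimension count
gives `t = F q + g c`, and multiplying by the conjugate, `t² = t t̄ = S |q|² + g E` with `E` real.
Writing `q = q₁ + i q₂`, the term `S |q|²` is the sum of `(qⱼ u₂')² + (qⱼ u₁')²`, and each pair
`(qⱼ u₂', -qⱼ u₁')` lies in the kernel of `(w₁, w₂) ↦ u₁ w₁ + u₂ w₂`. Finally `E` has degree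
`2d - m ≥ 2 deg u₁'`, so the same dimension count puts it in the ideal `(u₁', u₂')`, which puts
`g E` in the image of `(v₁, v₂) ↦ u₁ v₁ + u₂ v₂`.
-/

open MvPolynomial Module

namespace MvPolynomial

section Homogeneous

variable {σ R : Type*}

theorem homogeneousComponent_add_mul_of_isHomogeneous [CommSemiring R]
    {F : MvPolynomial σ R} {α : ℕ} (hF : F.IsHomogeneous α) (c : MvPolynomial σ R) (k : ℕ) :
    homogeneousComponent (α + k) (F * c) = F * homogeneousComponent k c := by
  let _ := MvPolynomial.gradedAlgebra (σ := σ) (R := R)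
  rw [← decomposition.decompose'_apply, ← decomposition.decompose'_apply]
  exact DirectSum.coe_decompose_mul_add_of_left_mem (homogeneousSubmodule σ R) hF

theorem IsHomogeneous.of_mul_left [CommRing R] [IsDomain R] {F c : MvPolynomial σ R} {α n : ℕ}
    (hF : F.IsHomogeneous α) (hF0 : F ≠ 0) (h : (F * c).IsHomogeneous n) :
    c.IsHomogeneous (n - α) := by
  intro d hd
  have hcomp : F * homogeneousComponent d.degree c ≠ 0 := by
    refine mul_ne_zero hF0 fun h0 => hd ?_
    simpa [coeff_homogeneousComponent] using congrArg (coeff d) h0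
  rw [← homogeneousComponent_add_mul_of_isHomogeneous hF,
    homogeneousComponent_of_mem (n := n) h] at hcomp
  have : α + d.degree = n := by by_contra hne; exact hcomp (if_neg hne)
  show Finsupp.weight (fun _ => 1) d = n - α
  rw [← Finsupp.degree_eq_weight_one]
  omega

theorem exists_isHomogeneous_eq_mul_of_isUnit [CommRing R] [IsDomain R]
    {G h : MvPolynomial σ R} {β n : ℕ} (hG : G.IsHomogeneous β) (hu : IsUnit G)
    (hh : h.IsHomogeneous n) : ∃ b, b.IsHomogeneous (n - β) ∧ h = G * b := by
  obtain ⟨G', hGG'⟩ := hu.exists_right_inv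
  have hdiv : h = G * (G' * h) := by rw [← mul_assoc, hGG', one_mul]
  exact ⟨G' * h, hG.of_mul_left hu.ne_zero (hdiv ▸ hh), hdiv⟩

end Homogeneous

section BinaryForms

variable {σ K : Type*} [Field K]

instance [Finite σ] (n : ℕ) : Module.Finite K (homogeneousSubmodule σ K n) :=
  Module.Finite.iff_fg.mpr (homogeneousSubmodule_fg σ K n)

theorem finrank_homogeneousSubmodule [Fintype σ] [DecidableEq σ] (n : ℕ) :
    finrank K (homogeneousSubmodule σ K n) = (Fintype.card σ + n - 1).choose n := by
  have hset : {d : σ →₀ ℕ | d.degree = n} = ↑((Finset.univ : Finset σ).finsuppAntidiag n) := by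
    ext d
    simp [Finset.mem_finsuppAntidiag, Finsupp.degree_eq_sum]
  rw [homogeneousSubmodule_eq_finsupp_supported, hset, ← restrictSupport,
    finrank_eq_card_basis (basisRestrictSupport K _)]
  simp [Finset.card_finsuppAntidiag_nat_eq_choose]

theorem finrank_homogeneousSubmodule_fin_two (n : ℕ) :
    finrank K (homogeneousSubmodule (Fin 2) K n) = n + 1 := by
  rw [finrank_homogeneousSubmodule, Fintype.card_fin, show 2 + n - 1 = n + 1 by omega,
    Nat.choose_succ_self_right]

theorem exists_isHomogeneous_eq_mul_add_mul_of_ne_zero {F G h : MvPolynomial (Fin 2) K}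
    {α β n : ℕ} (hF : F.IsHomogeneous α) (hG : G.IsHomogeneous β) (hF0 : F ≠ 0) (hG0 : G ≠ 0)
    (hFG : IsRelPrime F G) (hn : α + β ≤ n) (hh : h.IsHomogeneous n) :
    ∃ a b, a.IsHomogeneous (n - α) ∧ b.IsHomogeneous (n - β) ∧ h = F * a + G * b := by
  -- `F V_{n-α} ∩ G V_{n-β} ⊆ F G V_{n-α-β}`, so `F V_{n-α} + G V_{n-β}` has dimension `n + 1`.
  set A := (homogeneousSubmodule (Fin 2) K (n - α)).map (LinearMap.mulLeft K F)
  set B := (homogeneousSubmodule (Fin 2) K (n - β)).map (LinearMap.mulLeft K G)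
  have hA : finrank K A = n - α + 1 := by
    rw [← (Submodule.equivMapOfInjective _ (mul_right_injective₀ hF0) _).finrank_eq,
      finrank_homogeneousSubmodule_fin_two]
  have hB : finrank K B = n - β + 1 := by
    rw [← (Submodule.equivMapOfInjective _ (mul_right_injective₀ hG0) _).finrank_eq,
      finrank_homogeneousSubmodule_fin_two]
  have hAB : A ⊓ B ≤
      (homogeneousSubmodule (Fin 2) K (n - α - β)).map (LinearMap.mulLeft K (F * G)) := by
    rintro _ ⟨⟨a, ha, rfl⟩, ⟨b, hb, hab⟩⟩
    obtain ⟨c, rfl⟩ := hFG.symm.dvd_of_dvd_mul_left ⟨b, hab.symm⟩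
    refine ⟨c, ?_, by simp⟩
    simpa [Nat.sub_right_comm] using hG.of_mul_left hG0 ha
  have hABn : finrank K ↥(A ⊓ B) ≤ n - α - β + 1 :=
    (Submodule.finrank_mono hAB).trans
      ((Submodule.finrank_map_le _ _).trans (finrank_homogeneousSubmodule_fin_two _).le)
  have hle : A ⊔ B ≤ homogeneousSubmodule (Fin 2) K n := by
    refine sup_le ?_ ?_ <;> rintro _ ⟨a, ha, rfl⟩
    · simpa [Nat.add_sub_cancel' (by omega : α ≤ n)] using hF.mul ha
    · simpa [Nat.add_sub_cancel' (by omega : β ≤ n)] using hG.mul ha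
  have hsup : A ⊔ B = homogeneousSubmodule (Fin 2) K n := by
    refine Submodule.eq_of_le_of_finrank_le hle ?_
    have := Submodule.finrank_sup_add_finrank_inf_eq A B
    rw [finrank_homogeneousSubmodule_fin_two]
    omega
  obtain ⟨_, ⟨a, ha, rfl⟩, _, ⟨b, hb, rfl⟩, hab⟩ := Submodule.mem_sup.mp (hsup.ge hh)
  exact ⟨a, b, ha, hb, hab.symm⟩

theorem _root_.IsRelPrime.exists_isHomogeneous_eq_mul_add_mul {F G h : MvPolynomial (Fin 2) K}
    {α β n : ℕ} (hF : F.IsHomogeneous α) (hG : G.IsHomogeneous β)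
    (hFG : IsRelPrime F G) (hn : α + β ≤ n) (hh : h.IsHomogeneous n) :
    ∃ a b, a.IsHomogeneous (n - α) ∧ b.IsHomogeneous (n - β) ∧ h = F * a + G * b := by
  rcases eq_or_ne F 0 with rfl | hF0
  · obtain ⟨b, hb, rfl⟩ :=
      exists_isHomogeneous_eq_mul_of_isUnit hG (isRelPrime_zero_left.mp hFG) hh
    exact ⟨0, b, isHomogeneous_zero _ _ _, hb, by ring⟩
  rcases eq_or_ne G 0 with rfl | hG0
  · obtain ⟨a, ha, rfl⟩ :=
      exists_isHomogeneous_eq_mul_of_isUnit hF (isRelPrime_zero_right.mp hFG) hh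
    exact ⟨a, 0, ha, isHomogeneous_zero _ _ _, by ring⟩
  exact exists_isHomogeneous_eq_mul_add_mul_of_ne_zero hF hG hF0 hG0 hFG hn hh

end BinaryForms

section Complexify

variable {σ : Type*}

noncomputable abbrev complexify : MvPolynomial σ ℝ →+* MvPolynomial σ ℂ :=
  map Complex.ofRealHom

noncomputable abbrev conjPoly : MvPolynomial σ ℂ →+* MvPolynomial σ ℂ :=
  map (starRingEnd ℂ)

theorem complexify_injective : Function.Injective (complexify (σ := σ)) :=
  map_injective _ Complex.ofReal_injective

@[simp]
theorem conjPoly_complexify (f : MvPolynomial σ ℝ) : conjPoly (complexify f) = complexify f := by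
  rw [map_map, show (starRingEnd ℂ).comp Complex.ofRealHom = Complex.ofRealHom from
    RingHom.ext Complex.conj_ofReal]

@[simp]
theorem conjPoly_conjPoly (P : MvPolynomial σ ℂ) : conjPoly (conjPoly P) = P := by
  rw [map_map, show (starRingEnd ℂ).comp (starRingEnd ℂ) = RingHom.id ℂ from
    RingHom.ext Complex.conj_conj, map_id]

theorem exists_complexify_eq_of_conjPoly_eq {P : MvPolynomial σ ℂ} (h : conjPoly P = P) :
    ∃ f, complexify f = P := by
  refine mem_range_map_iff_coeffs_subset.mpr fun z hz => ?_
  obtain ⟨d, -, rfl⟩ := mem_coeffs_iff.mp hz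
  have hd : starRingEnd ℂ (coeff d P) = coeff d P := by rw [← coeff_map, h]
  obtain ⟨r, hr⟩ := Complex.conj_eq_iff_real.mp hd
  exact ⟨r, hr.symm⟩

theorem exists_isHomogeneous_eq_complexify_add_I_mul {P : MvPolynomial σ ℂ} {n : ℕ}
    (hP : P.IsHomogeneous n) :
    ∃ a b, a.IsHomogeneous n ∧ b.IsHomogeneous n ∧
      P = complexify a + C Complex.I * complexify b := by
  obtain ⟨a, ha⟩ := exists_complexify_eq_of_conjPoly_eq (P := C 2⁻¹ * (P + conjPoly P))
    (by simp only [map_mul, map_add, map_C, map_inv₀, map_ofNat, conjPoly_conjPoly]; ring)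
  obtain ⟨b, hb⟩ := exists_complexify_eq_of_conjPoly_eq
    (P := C (Complex.I / 2) * (conjPoly P - P))
    (by simp only [map_mul, map_sub, map_C, map_div₀, map_ofNat, Complex.conj_I, map_neg,
      neg_div, conjPoly_conjPoly]; ring)
  have hI : (C Complex.I * C (Complex.I / 2) : MvPolynomial σ ℂ) = -C 2⁻¹ := by
    rw [← C_mul, ← map_neg, mul_div_assoc', Complex.I_mul_I, neg_div, one_div]
  have h2 : (C 2⁻¹ * 2 : MvPolynomial σ ℂ) = 1 := by
    rw [← map_ofNat C, ← C_mul, inv_mul_cancel₀ two_ne_zero, map_one]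
  refine ⟨a, b, ?_, ?_, ?_⟩
  · exact IsHomogeneous.of_map Complex.ofReal_injective (ha ▸ (hP.add (hP.map _)).C_mul _)
  · exact IsHomogeneous.of_map Complex.ofReal_injective (hb ▸ ((hP.map _).sub hP).C_mul _)
  · rw [ha, hb]
    linear_combination (P - conjPoly P) * hI - P * h2

theorem complexify_dvd_complexify_iff {f h : MvPolynomial σ ℝ} :
    complexify f ∣ complexify h ↔ f ∣ h := by
  refine ⟨fun ⟨c, hc⟩ => ?_, map_dvd _⟩
  rcases eq_or_ne f 0 with rfl | hf0
  · have h0 : complexify h = complexify 0 := by rw [hc, map_zero, zero_mul]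
    rw [complexify_injective h0]
  have hcc : conjPoly c = c := by
    refine mul_left_cancel₀ ((map_ne_zero_iff _ complexify_injective).mpr hf0) ?_
    have hconj := congrArg conjPoly hc
    rwa [conjPoly_complexify, map_mul, conjPoly_complexify, hc, eq_comm] at hconj
  obtain ⟨r, rfl⟩ := exists_complexify_eq_of_conjPoly_eq hcc
  exact ⟨r, complexify_injective (by rw [hc, map_mul])⟩

theorem complexify_add_I_mul_mul_conjPoly (a b : MvPolynomial σ ℝ) :
    (complexify a + C Complex.I * complexify b) *
      conjPoly (complexify a + C Complex.I * complexify b) = complexify (a ^ 2 + b ^ 2) := by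
  have hII : (C Complex.I * C Complex.I : MvPolynomial σ ℂ) = -1 := by
    rw [← C_mul, Complex.I_mul_I, map_neg, map_one]
  simp only [map_add, map_mul, map_pow, conjPoly_complexify, map_C, Complex.conj_I, map_neg]
  linear_combination (-complexify b ^ 2) * hII

theorem _root_.IsRelPrime.complexify_add_I_mul {g u₁ u₂ : MvPolynomial σ ℝ}
    (h : IsRelPrime g (u₁ ^ 2 + u₂ ^ 2)) :
    IsRelPrime (complexify u₁ + C Complex.I * complexify u₂) (complexify g) := by
  intro w hwF hwg
  obtain ⟨r, hr⟩ := exists_complexify_eq_of_conjPoly_eq (P := w * conjPoly w)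
    (by rw [map_mul, conjPoly_conjPoly, mul_comm])
  have hrS : r ∣ u₁ ^ 2 + u₂ ^ 2 := by
    rw [← complexify_dvd_complexify_iff, hr, ← complexify_add_I_mul_mul_conjPoly]
    exact mul_dvd_mul hwF (map_dvd _ hwF)
  have hrg : r ∣ g * g := by
    rw [← complexify_dvd_complexify_iff, hr, map_mul]
    exact mul_dvd_mul hwg (conjPoly_complexify g ▸ map_dvd _ hwg)
  exact isUnit_of_mul_isUnit_left (hr ▸ ((h.mul_left h) hrg hrS).map complexify)

end Complexify

end MvPolynomial

section Cone

variable {σ R : Type*} [CommRing R]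

/-- `p ∈ image(A_u) + cone(σ(ker A_u))` in the notation of the paper, where
`A_u (v₁, v₂) = u₁ v₁ + u₂ v₂` acts on pairs of forms of degree `d` and `σ (w₁, w₂) = w₁² + w₂²`. -/
def MemImageAddKerSqCone (d : ℕ) (u₁ u₂ p : MvPolynomial σ R) : Prop :=
  ∃ (v₁ v₂ : MvPolynomial σ R) (N : ℕ) (w₁ w₂ : Fin N → MvPolynomial σ R),
    v₁.IsHomogeneous d ∧ v₂.IsHomogeneous d ∧
    (∀ i, (w₁ i).IsHomogeneous d ∧ (w₂ i).IsHomogeneous d) ∧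
    (∀ i, u₁ * w₁ i + u₂ * w₂ i = 0) ∧
    p = u₁ * v₁ + u₂ * v₂ + ∑ i, ((w₁ i) ^ 2 + (w₂ i) ^ 2)

namespace MemImageAddKerSqCone

variable {d : ℕ} {u₁ u₂ : MvPolynomial σ R}

theorem mul_add_mul {v₁ v₂ : MvPolynomial σ R} (hv₁ : v₁.IsHomogeneous d)
    (hv₂ : v₂.IsHomogeneous d) : MemImageAddKerSqCone d u₁ u₂ (u₁ * v₁ + u₂ * v₂) :=
  ⟨v₁, v₂, 0, Fin.elim0, Fin.elim0, hv₁, hv₂, fun i => i.elim0, fun i => i.elim0, by simp⟩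

theorem zero : MemImageAddKerSqCone d u₁ u₂ 0 := by
  simpa using mul_add_mul (u₁ := u₁) (u₂ := u₂) (isHomogeneous_zero _ _ d)
    (isHomogeneous_zero _ _ d)

theorem sq_add_sq {w₁ w₂ : MvPolynomial σ R} (hw₁ : w₁.IsHomogeneous d)
    (hw₂ : w₂.IsHomogeneous d) (hker : u₁ * w₁ + u₂ * w₂ = 0) :
    MemImageAddKerSqCone d u₁ u₂ (w₁ ^ 2 + w₂ ^ 2) :=
  ⟨0, 0, 1, fun _ => w₁, fun _ => w₂, isHomogeneous_zero _ _ d, isHomogeneous_zero _ _ d,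
    fun _ => ⟨hw₁, hw₂⟩, fun _ => hker, by simp⟩

theorem add {p p' : MvPolynomial σ R} (hp : MemImageAddKerSqCone d u₁ u₂ p)
    (hp' : MemImageAddKerSqCone d u₁ u₂ p') : MemImageAddKerSqCone d u₁ u₂ (p + p') := by
  obtain ⟨v₁, v₂, N, w₁, w₂, hv₁, hv₂, hw, hker, rfl⟩ := hp
  obtain ⟨v₁', v₂', N', w₁', w₂', hv₁', hv₂', hw', hker', rfl⟩ := hp'
  refine ⟨v₁ + v₁', v₂ + v₂', N + N', Fin.append w₁ w₁', Fin.append w₂ w₂', hv₁.add hv₁',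
    hv₂.add hv₂', Fin.addCases (by simpa using hw) (by simpa using hw'),
    Fin.addCases (by simpa using hker) (by simpa using hker'), ?_⟩
  simp only [Fin.sum_univ_add, Fin.append_left, Fin.append_right]
  ring

theorem sum {ι : Type*} {s : Finset ι} {f : ι → MvPolynomial σ R}
    (hf : ∀ i ∈ s, MemImageAddKerSqCone d u₁ u₂ (f i)) :
    MemImageAddKerSqCone d u₁ u₂ (∑ i ∈ s, f i) :=
  Finset.sum_induction f _ (fun _ _ => add) zero hf

end MemImageAddKerSqCone

end Cone

theorem exists_sq_eq_mul_sq_add_sq_add_mul {d m : ℕ} (hm : m ≤ d) {g u₁ u₂ t : MvPolynomial (Fin 2) ℝ}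
    (hg : g.IsHomogeneous m) (hu₁ : u₁.IsHomogeneous (d - m)) (hu₂ : u₂.IsHomogeneous (d - m))
    (hcopg : IsRelPrime g (u₁ ^ 2 + u₂ ^ 2)) (ht : t.IsHomogeneous d) :
    ∃ q₁ q₂ D, q₁.IsHomogeneous m ∧ q₂.IsHomogeneous m ∧
      t ^ 2 = (u₁ ^ 2 + u₂ ^ 2) * (q₁ ^ 2 + q₂ ^ 2) + g * D := by
  set F := complexify u₁ + C Complex.I * complexify u₂
  have hF : F.IsHomogeneous (d - m) :=
    (hu₁.map _).add (by simpa using (hu₂.map Complex.ofRealHom).C_mul Complex.I)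
  obtain ⟨q, c, hq, -, htqc⟩ := hcopg.complexify_add_I_mul.exists_isHomogeneous_eq_mul_add_mul
    hF (hg.map _) (by omega : d - m + m ≤ d) (ht.map _)
  rw [Nat.sub_sub_self hm] at hq
  obtain ⟨q₁, q₂, hq₁, hq₂, rfl⟩ := exists_isHomogeneous_eq_complexify_add_I_mul hq
  set Q := complexify q₁ + C Complex.I * complexify q₂
  set E := F * Q * conjPoly c + conjPoly (F * Q) * c + complexify g * c * conjPoly c
  obtain ⟨D, hD⟩ := exists_complexify_eq_of_conjPoly_eq (P := E)
    (by simp only [E, map_add, map_mul, conjPoly_conjPoly, conjPoly_complexify]; ring)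
  refine ⟨q₁, q₂, D, hq₁, hq₂, complexify_injective ?_⟩
  calc complexify (t ^ 2) = complexify t * conjPoly (complexify t) := by
        rw [conjPoly_complexify, map_pow, sq]
    _ = (F * conjPoly F) * (Q * conjPoly Q) + complexify g * E := by
        rw [htqc]; simp only [E, map_add, map_mul, conjPoly_complexify]; ring
    _ = _ := by
        rw [← hD, complexify_add_I_mul_mul_conjPoly, complexify_add_I_mul_mul_conjPoly,
          ← map_mul, ← map_mul, ← map_add]

theorem memImageAddKerSqCone_sq {d m : ℕ} (hm : m ≤ d) {g u₁ u₂ t : MvPolynomial (Fin 2) ℝ}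
    (hg : g.IsHomogeneous m) (hu₁ : u₁.IsHomogeneous (d - m)) (hu₂ : u₂.IsHomogeneous (d - m))
    (hcop : IsRelPrime u₁ u₂) (hcopg : IsRelPrime g (u₁ ^ 2 + u₂ ^ 2))
    (ht : t.IsHomogeneous d) : MemImageAddKerSqCone d (g * u₁) (g * u₂) (t ^ 2) := by
  rcases eq_or_ne g 0 with rfl | hg0
  · have h := MemImageAddKerSqCone.sq_add_sq (u₁ := 0 * u₁) (u₂ := 0 * u₂) ht
      (isHomogeneous_zero _ _ d) (by ring)
    rwa [zero_pow two_ne_zero, add_zero] at h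
  obtain ⟨q₁, q₂, D, hq₁, hq₂, htD⟩ := exists_sq_eq_mul_sq_add_sq_add_mul hm hg hu₁ hu₂ hcopg ht
  have hgD : (g * D).IsHomogeneous (d * 2) := by
    have hSQ := ((hu₁.pow 2).add (hu₂.pow 2)).mul ((hq₁.pow 2).add (hq₂.pow 2))
    rw [show (d - m) * 2 + m * 2 = d * 2 by omega] at hSQ
    rw [show g * D = t ^ 2 - (u₁ ^ 2 + u₂ ^ 2) * (q₁ ^ 2 + q₂ ^ 2) by rw [htD]; ring]
    exact (ht.pow 2).sub hSQ
  have hD := hg.of_mul_left hg0 hgD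
  rw [show d * 2 - m = d - m + d by omega] at hD
  obtain ⟨a₁, a₂, ha₁, ha₂, rfl⟩ :=
    hcop.exists_isHomogeneous_eq_mul_add_mul hu₁ hu₂ (by omega : d - m + (d - m) ≤ d - m + d) hD
  rw [Nat.add_sub_cancel_left] at ha₁ ha₂
  have hker : ∀ q : MvPolynomial (Fin 2) ℝ, q.IsHomogeneous m →
      MemImageAddKerSqCone d (g * u₁) (g * u₂) ((q * u₂) ^ 2 + (-(q * u₁)) ^ 2) := by
    intro q hq
    have hdeg : m + (d - m) = d := by omega
    exact .sq_add_sq (hdeg ▸ hq.mul hu₂) (hdeg ▸ (hq.mul hu₁).neg) (by ring)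
  rw [htD, show (u₁ ^ 2 + u₂ ^ 2) * (q₁ ^ 2 + q₂ ^ 2) + g * (u₁ * a₁ + u₂ * a₂) =
      (g * u₁ * a₁ + g * u₂ * a₂) + (((q₁ * u₂) ^ 2 + (-(q₁ * u₁)) ^ 2) +
        ((q₂ * u₂) ^ 2 + (-(q₂ * u₁)) ^ 2)) by ring]
  exact (MemImageAddKerSqCone.mul_add_mul ha₁ ha₂).add ((hker q₁ hq₁).add (hker q₂ hq₂))

/-- The case `h = 1`: if `u₁ = g u₁'`, `u₂ = g u₂'` with `u₁', u₂'` coprime and `g` coprime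
with `u₁'² + u₂'²`, then every sum of squares `p` of binary forms of degree `d` lies in
`image(A_u) + cone(σ(ker A_u))`. -/
theorem membership_when_h_eq_one
    (d m : ℕ) (hm : m ≤ d)
    (g u₁' u₂' : MvPolynomial (Fin 2) ℝ)
    (hg : g.IsHomogeneous m)
    (hu₁' : u₁'.IsHomogeneous (d - m)) (hu₂' : u₂'.IsHomogeneous (d - m))
    (hcop : ∀ w : MvPolynomial (Fin 2) ℝ, w ∣ u₁' → w ∣ u₂' → IsUnit w)
    (hcopg : ∀ w : MvPolynomial (Fin 2) ℝ, w ∣ g → w ∣ (u₁' ^ 2 + u₂' ^ 2) → IsUnit w) :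
    ∀ p : MvPolynomial (Fin 2) ℝ, p.IsHomogeneous (2 * d) →
      (∃ (N : ℕ) (t : Fin N → MvPolynomial (Fin 2) ℝ),
        (∀ i, (t i).IsHomogeneous d) ∧ p = ∑ i, (t i) ^ 2) →
      ∃ (v₁ v₂ : MvPolynomial (Fin 2) ℝ) (N : ℕ)
          (w₁ w₂ : Fin N → MvPolynomial (Fin 2) ℝ),
        v₁.IsHomogeneous d ∧ v₂.IsHomogeneous d ∧
        (∀ i, (w₁ i).IsHomogeneous d ∧ (w₂ i).IsHomogeneous d) ∧
        (∀ i, (g * u₁') * w₁ i + (g * u₂') * w₂ i = 0) ∧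
        p = (g * u₁') * v₁ + (g * u₂') * v₂ + ∑ i, ((w₁ i) ^ 2 + (w₂ i) ^ 2) := by
  rintro p - ⟨N, t, ht, rfl⟩
  exact MemImageAddKerSqCone.sum fun i _ =>
    memImageAddKerSqCone_sq hm hg hu₁' hu₂' (fun w => hcop w) (fun w => hcopg w) (ht i)
end

section
/- Let ⟪·,·⟫ be a symmetric bilinear form on MvPolynomial (Fin 2) ℝ that is positive definite on the subspace of binary forms of degree 2d, with ‖q‖² = ⟪q,q⟫. Suppose u₁ = u₁'·g·h and u₂ = u₂'·g·h are binary forms of degree d, where g is a binary form of degree m, h is a binary form of degree k, u₁', u₂' are coprime binary forms of degree d − m − k, g and u₁'² + u₂'² are coprime, and every (α,β) ∈ ℂ², (α,β) ≠ (0,0), at which h vanishes (after mapping coefficients into ℂ) is also a zero of u₁'² + u₂'². Let p be a binary form of degree 2d that is a sum of squares of binary forms of degree d, and suppose: (gradient) ⟪u₁v₁ + u₂v₂, u₁² + u₂² − p⟫ = 0 for all binary forms v₁, v₂ of degree d; (Hessian) ⟪v₁² + v₂², u₁² + u₂² − p⟫ + 2‖u₁v₁ + u₂v₂‖² ≥ 0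 for all binary forms v₁, v₂ of degree d; and (membership) there exist binary forms v₁', v₂' of degree d and a finite family of pairs (w₁⁽ⁱ⁾, w₂⁽ⁱ⁾) of binary forms of degree d with u₁w₁⁽ⁱ⁾ + u₂w₂⁽ⁱ⁾ = 0 for each i, such that p = u₁'·g·x₁ᵏ·v₁' + u₂'·g·x₁ᵏ·v₂' + ∑ᵢ ((w₁⁽ⁱ⁾)² + (w₂⁽ⁱ⁾)²). Then u₁² + u₂² = p. -/
/-!
Put `q = u₁² + u₂² - p` and `e = u₁'² + u₂'²`. The gradient condition at `v = u` gives
`⟪u₁² + u₂², q⟫ = 0`, and the Hessian at the kernel vectors `wⁱ` gives `⟪(w₁ⁱ)² + (w₂ⁱ)², q⟫ ≥ 0`;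
so `‖q‖² ≤ 0` as soon as `q` is orthogonal to `g · t` for every form `t` of the right degree.

That orthogonality is obtained by removing the factors of `h` one at a time. Since `u₁', u₂'`
are coprime, every form of degree at least `2 deg u'` is `u₁' v₁ + u₂' v₂`, so the gradient
condition gives `q ⊥ g h · t`. Suppose `h = δ c`, that `γ` divides both `c` and `e`, and that
`q ⊥ g δ γ · t` for all `t`. For `a = g δ c'` with `deg c' = deg c`, the direction
`(u₂' a, -u₁' a)` lies in the kernel of `v ↦ u₁ v₁ + u₂ v₂` and `⟪e a², q⟫ = 0`, so it is an
isotropic vector of the nonnegative Hessian, hence in its radical; this gives `q ⊥ a · t`, and so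
`q ⊥ g δ · t`. A common factor `γ` exists because every complex zero of `h` is a zero of `e`.
-/

open MvPolynomial

namespace MvPolynomial

variable {σ R : Type*}

theorem homogeneousSubmodule_add_le_mul [CommSemiring R] (i j : ℕ) :
    homogeneousSubmodule σ R (i + j) ≤
      homogeneousSubmodule σ R i * homogeneousSubmodule σ R j := by
  intro t ht
  rw [t.as_sum]
  refine Submodule.sum_mem _ fun d hd => ?_
  have hdeg : d.degree = i + j := (IsHomogeneous.degree_eq_sum_deg_support ht hd).symm
  obtain ⟨e, hed, he⟩ := Finsupp.exists_le_degree_eq d i (by omega)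
  have hde : (d - e).degree = j := by
    have := map_add Finsupp.degree e (d - e)
    rw [add_tsub_cancel_of_le hed] at this
    omega
  rw [← add_tsub_cancel_of_le hed, ← one_mul (coeff _ t), ← monomial_mul]
  exact Submodule.mul_mem_mul (isHomogeneous_monomial _ he) (isHomogeneous_monomial _ hde)

attribute [local instance] MvPolynomial.gradedAlgebra in
theorem homogeneousComponent_mul_of_isHomogeneous_left [CommSemiring R] {φ : MvPolynomial σ R}
    {m : ℕ} (hφ : φ.IsHomogeneous m) (ψ : MvPolynomial σ R) (i : ℕ) :
    homogeneousComponent (m + i) (φ * ψ) = φ * homogeneousComponent i ψ := by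
  rw [← decomposition.decompose'_apply, ← decomposition.decompose'_apply]
  exact DirectSum.coe_decompose_mul_add_of_left_mem (homogeneousSubmodule σ R) hφ

theorem IsHomogeneous.exists_eq_add_of_mul [CommRing R] [IsDomain R]
    {φ ψ : MvPolynomial σ R} {m n : ℕ} (hφ : φ.IsHomogeneous m)
    (hφψ : (φ * ψ).IsHomogeneous n) (h0 : φ * ψ ≠ 0) :
    ∃ k, n = m + k ∧ ψ.IsHomogeneous k := by
  have key : ∀ d ∈ ψ.support, n = m + d.degree := by
    intro d hd
    by_contra hne
    have h1 : homogeneousComponent d.degree ψ = 0 := by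
      have := homogeneousComponent_mul_of_isHomogeneous_left hφ ψ d.degree
      rw [homogeneousComponent_of_mem hφψ, if_neg (Ne.symm hne)] at this
      exact (mul_eq_zero.mp this.symm).resolve_left (left_ne_zero_of_mul h0)
    have := congrArg (coeff d) h1
    rw [coeff_homogeneousComponent, if_pos rfl, coeff_zero] at this
    exact mem_support_iff.mp hd this
  obtain ⟨d, hd⟩ := support_nonempty.mpr (right_ne_zero_of_mul h0)
  refine ⟨d.degree, key d hd, fun e he => ?_⟩
  have hne := key e (mem_support_iff.mpr he)
  have hnd := key d hd
  change Finsupp.weight (fun _ => 1) e = _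
  rw [← Finsupp.degree_eq_weight_one]
  omega

theorem sq_add_sq_ne_zero [Field R] [LinearOrder R] [IsStrictOrderedRing R]
    {a b : MvPolynomial σ R} (h : ¬(a = 0 ∧ b = 0)) : a ^ 2 + b ^ 2 ≠ 0 := by
  have : Infinite R := Infinite.of_injective _ Nat.cast_injective
  intro hab
  have hx : ∀ x, eval x a = 0 ∧ eval x b = 0 := fun x => by
    have := congrArg (eval x) hab
    simp only [map_add, map_pow, map_zero] at this
    constructor <;> nlinarith [sq_nonneg (eval x a), sq_nonneg (eval x b)]
  exact h ⟨MvPolynomial.funext fun x => by simp [(hx x).1],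
    MvPolynomial.funext fun x => by simp [(hx x).2]⟩

section VanishesOnMultiples

variable {M : Type*} [CommSemiring R] [AddCommMonoid M] [Module R M]

def VanishesOnMultiples (ℓ : MvPolynomial σ R →ₗ[R] M) (a : MvPolynomial σ R) (n : ℕ) :
    Prop :=
  ∀ t : MvPolynomial σ R, t.IsHomogeneous n → ℓ (a * t) = 0

variable {ℓ : MvPolynomial σ R →ₗ[R] M} {a : MvPolynomial σ R}

theorem VanishesOnMultiples.C_mul {n : ℕ} (h : VanishesOnMultiples ℓ a n) (r : R) :
    VanishesOnMultiples ℓ (C r * a) n := fun t ht => by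
  rw [mul_assoc, ← smul_eq_C_mul, map_smul, h t ht, smul_zero]

theorem vanishesOnMultiples_add_of_forall_mul {i n : ℕ}
    (h : ∀ c : MvPolynomial σ R, c.IsHomogeneous i → VanishesOnMultiples ℓ (a * c) n) :
    VanishesOnMultiples ℓ a (i + n) := by
  have : homogeneousSubmodule σ R i * homogeneousSubmodule σ R n ≤
      LinearMap.ker (ℓ ∘ₗ LinearMap.mulLeft R a) :=
    Submodule.mul_le.mpr fun c hc s hs => by simpa [mul_assoc] using h c hc s hs
  exact fun t ht => this (homogeneousSubmodule_add_le_mul i n ht)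

end VanishesOnMultiples

end MvPolynomial

namespace BinaryForm

section CommRing
variable {R : Type*} [CommRing R]

noncomputable def dehomogenize : MvPolynomial (Fin 2) R →ₐ[R] Polynomial R :=
  aeval ![Polynomial.X, 1]

theorem homogenize_dehomogenize {F : MvPolynomial (Fin 2) R} {n : ℕ} (hF : F.IsHomogeneous n) :
    (dehomogenize F).homogenize n = F :=
  Polynomial.homogenize_eq_of_isHomogeneous hF rfl

theorem natDegree_dehomogenize_le {F : MvPolynomial (Fin 2) R} {n : ℕ} (hF : F.IsHomogeneous n) :
    (dehomogenize F).natDegree ≤ n := by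
  rw [F.as_sum, map_sum]
  refine Polynomial.natDegree_sum_le_of_forall_le _ _ fun d hd => ?_
  have hdn : d 0 ≤ n := (Finsupp.le_degree 0 d).trans (hF.degree_eq_sum_deg_support hd).ge
  simp only [dehomogenize, aeval_monomial, Finsupp.prod_fintype _ _ (fun i => pow_zero _),
    Fin.prod_univ_two, Polynomial.algebraMap_eq, Matrix.cons_val_zero, Matrix.cons_val_one,
    one_pow, mul_one]
  exact (Polynomial.natDegree_C_mul_X_pow_le _ _).trans hdn

theorem dehomogenize_eq_zero_iff {F : MvPolynomial (Fin 2) R} {n : ℕ} (hF : F.IsHomogeneous n) :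
    dehomogenize F = 0 ↔ F = 0 := by
  refine ⟨fun h => ?_, fun h => h ▸ map_zero _⟩
  rw [← homogenize_dehomogenize hF, h, Polynomial.homogenize_zero]

theorem eval_one_zero_eq_coeff_dehomogenize {F : MvPolynomial (Fin 2) R} {n : ℕ}
    (hF : F.IsHomogeneous n) :
    eval ![1, 0] F = (dehomogenize F).coeff n := by
  conv_lhs => rw [← homogenize_dehomogenize hF]
  simp only [Polynomial.homogenize, map_sum, eval_monomial,
    Finsupp.prod_fintype _ _ (fun i => pow_zero _), Fin.prod_univ_two]
  rw [Finset.sum_eq_single (n, 0)]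
  · simp
  · rintro ⟨i, j⟩ hij hne
    have : j ≠ 0 := by rintro rfl; simp_all
    simp [this]
  · simp

theorem eval_map_eq_aeval_dehomogenize {L : Type*} [CommRing L] [Algebra R L]
    (F : MvPolynomial (Fin 2) R) (z : L) :
    eval ![z, 1] (map (algebraMap R L) F) = Polynomial.aeval z (dehomogenize F) := by
  rw [eval_map, ← aeval_def, dehomogenize, ← AlgHom.comp_apply, comp_aeval]
  refine congrArg (fun x => aeval x F) (funext fun i => ?_)
  fin_cases i <;> simp

theorem dehomogenize_homogenize {P : Polynomial R} {n : ℕ} (hP : P.natDegree ≤ n) :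
    dehomogenize (P.homogenize n) = P :=
  Polynomial.aeval_homogenize_X_one P hP

theorem eval_one_zero_map {S : Type*} [CommRing S] (φ : R →+* S) (F : MvPolynomial (Fin 2) R) :
    eval ![1, 0] (map φ F) = φ (eval ![1, 0] F) := by
  rw [eval_map, eval, coe_eval₂Hom, eval₂_comp_left, RingHom.comp_id]
  congr 1
  funext i
  fin_cases i <;> simp

theorem not_isUnit_X_one [Nontrivial R] : ¬IsUnit (X 1 : MvPolynomial (Fin 2) R) := fun h =>
  not_isUnit_zero (M₀ := R) (by simpa using h.map (eval 0))

end CommRing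

section Field
variable {K : Type*} [Field K]

theorem homogenize_dvd_of_dvd_dehomogenize {F : MvPolynomial (Fin 2) K} {n : ℕ}
    (hF : F.IsHomogeneous n) {G : Polynomial K} (hG : G ∣ dehomogenize F) :
    G.homogenize G.natDegree ∣ F := by
  obtain ⟨D, hD⟩ := hG
  rcases eq_or_ne F 0 with rfl | hF0
  · exact dvd_zero _
  have hGD : G * D ≠ 0 := hD ▸ (dehomogenize_eq_zero_iff hF).not.mpr hF0
  have hdeg : G.natDegree + D.natDegree ≤ n := by
    rw [← Polynomial.natDegree_mul (left_ne_zero_of_mul hGD) (right_ne_zero_of_mul hGD), ← hD]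
    exact natDegree_dehomogenize_le hF
  refine ⟨D.homogenize (n - G.natDegree), ?_⟩
  rw [← Polynomial.homogenize_mul _ _ le_rfl (by omega), ← hD, Nat.add_sub_cancel' (by omega),
    homogenize_dehomogenize hF]

theorem X_one_dvd_of_coeff_dehomogenize_eq_zero {F : MvPolynomial (Fin 2) K} {n : ℕ}
    (hF : F.IsHomogeneous n) (h : (dehomogenize F).coeff n = 0) : X 1 ∣ F := by
  have hdeg := Polynomial.natDegree_le_pred (natDegree_dehomogenize_le hF) h
  rcases Nat.eq_zero_or_pos n with rfl | hn
  · have : dehomogenize F = 0 := by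
      rw [Polynomial.eq_C_of_natDegree_le_zero hdeg, h, map_zero]
    simp [(dehomogenize_eq_zero_iff hF).mp this]
  · refine ⟨(dehomogenize F).homogenize (n - 1), ?_⟩
    conv_lhs => rw [← homogenize_dehomogenize hF, ← one_mul (dehomogenize F),
      show n = 1 + (n - 1) by omega, Polynomial.homogenize_mul _ _ (by simp) hdeg]
    simp

theorem isCoprime_dehomogenize {a b : MvPolynomial (Fin 2) K} {n : ℕ} (ha : a.IsHomogeneous n)
    (hb : b.IsHomogeneous n) (hab : ∀ w, w ∣ a → w ∣ b → IsUnit w) :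
    IsCoprime (dehomogenize a) (dehomogenize b) := by
  refine EuclideanDomain.isCoprime_of_dvd ?_ fun z hz _ hza hzb => hz ?_
  · rw [dehomogenize_eq_zero_iff ha, dehomogenize_eq_zero_iff hb]
    rintro ⟨rfl, rfl⟩
    exact not_isUnit_zero (hab 0 dvd_rfl dvd_rfl)
  · have := (hab _ (homogenize_dvd_of_dvd_dehomogenize ha hza)
      (homogenize_dvd_of_dvd_dehomogenize hb hzb)).map dehomogenize
    rwa [dehomogenize_homogenize le_rfl] at this

theorem _root_.Polynomial.exists_mul_add_mul_eq_of_isCoprime {A B T : Polynomial K} {n j : ℕ}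
    (hAB : IsCoprime A B) (hA : A.natDegree ≤ n) (hB : B.degree = n) (hnj : n ≤ j)
    (hT : T.natDegree ≤ n + j) :
    ∃ V W : Polynomial K, V.natDegree ≤ j ∧ W.natDegree ≤ j ∧ A * V + B * W = T := by
  obtain ⟨S, R, hSR⟩ := hAB
  have hB0 : B ≠ 0 := by rintro rfl; simp at hB
  set V := S * T % B
  set W := T * R + A * (S * T / B)
  have hV : V.natDegree ≤ j := by
    refine Polynomial.natDegree_le_iff_degree_le.mpr
      ((Polynomial.degree_mod_lt _ hB0).le.trans ?_)
    rw [hB]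
    exact_mod_cast hnj
  have hAVW : A * V + B * W = T := by
    linear_combination A * EuclideanDomain.mod_add_div (S * T) B + T * hSR
  refine ⟨V, W, hV, ?_, hAVW⟩
  rcases eq_or_ne W 0 with hW | hW
  · simp [hW]
  have : (B * W).natDegree ≤ n + j := by
    rw [eq_sub_of_add_eq' hAVW]
    exact (Polynomial.natDegree_sub_le _ _).trans
      (max_le hT (Polynomial.natDegree_mul_le.trans (by omega)))
  rw [Polynomial.natDegree_mul hB0 hW, Polynomial.natDegree_eq_of_degree_eq_some hB] at this
  omega

theorem exists_mul_add_mul_eq {a b t : MvPolynomial (Fin 2) K} {n j : ℕ}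
    (ha : a.IsHomogeneous n) (hb : b.IsHomogeneous n) (hab : ∀ w, w ∣ a → w ∣ b → IsUnit w)
    (hnj : n ≤ j) (ht : t.IsHomogeneous (n + j)) :
    ∃ v w, v.IsHomogeneous j ∧ w.IsHomogeneous j ∧ a * v + b * w = t := by
  wlog hb' : (dehomogenize b).coeff n ≠ 0 generalizing a b
  · by_cases ha' : (dehomogenize a).coeff n = 0
    · exact absurd (hab _ (X_one_dvd_of_coeff_dehomogenize_eq_zero ha ha')
        (X_one_dvd_of_coeff_dehomogenize_eq_zero hb (not_not.mp hb'))) not_isUnit_X_one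
    · obtain ⟨w, v, hw, hv, h⟩ := this hb ha (fun w h1 h2 => hab w h2 h1) ha'
      exact ⟨v, w, hv, hw, by rw [← h, add_comm]⟩
  have hB : (dehomogenize b).degree = n :=
    Polynomial.degree_eq_of_le_of_coeff_ne_zero
      (Polynomial.natDegree_le_iff_degree_le.mp (natDegree_dehomogenize_le hb)) hb'
  obtain ⟨V, W, hV, hW, h⟩ := Polynomial.exists_mul_add_mul_eq_of_isCoprime
    (isCoprime_dehomogenize ha hb hab) (natDegree_dehomogenize_le ha) hB hnj
    (natDegree_dehomogenize_le ht)
  refine ⟨V.homogenize j, W.homogenize j, Polynomial.isHomogeneous_homogenize _,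
    Polynomial.isHomogeneous_homogenize _, ?_⟩
  rw [← homogenize_dehomogenize ha, ← homogenize_dehomogenize hb, ← homogenize_dehomogenize ht,
    ← h, Polynomial.homogenize_add,
    Polynomial.homogenize_mul _ _ (natDegree_dehomogenize_le ha) hV,
    Polynomial.homogenize_mul _ _ (natDegree_dehomogenize_le hb) hW]

theorem exists_isHomogeneous_dvd_dvd_of_zeros {L : Type*} [Field L] [IsAlgClosed L]
    [Algebra K L] {c e : MvPolynomial (Fin 2) K} {j l : ℕ} (hc : c.IsHomogeneous j) (hj : 0 < j)
    (hc0 : c ≠ 0) (he : e.IsHomogeneous l)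
    (hz : ∀ α β : L, (α, β) ≠ (0, 0) → eval ![α, β] (map (algebraMap K L) c) = 0 →
      eval ![α, β] (map (algebraMap K L) e) = 0) :
    ∃ (γ : MvPolynomial (Fin 2) K) (r : ℕ), 0 < r ∧ γ.IsHomogeneous r ∧ γ ∣ c ∧ γ ∣ e := by
  -- either `c` and `e` vanish at `(1, 0)`, or their dehomogenizations share a root in `L`
  by_cases hcj : (dehomogenize c).coeff j = 0
  · obtain ⟨D, hD⟩ := X_one_dvd_of_coeff_dehomogenize_eq_zero hc hcj
    have hez := hz 1 0 (by simp) (by simp [hD])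
    rw [eval_one_zero_map, map_eq_zero, eval_one_zero_eq_coeff_dehomogenize he] at hez
    exact ⟨X 1, 1, one_pos, isHomogeneous_X _ _, ⟨D, hD⟩,
      X_one_dvd_of_coeff_dehomogenize_eq_zero he hez⟩
  have hdeg : (dehomogenize c).natDegree = j :=
    Polynomial.natDegree_eq_of_le_of_coeff_ne_zero (natDegree_dehomogenize_le hc) hcj
  have hncop : ¬IsCoprime (dehomogenize c) (dehomogenize e) := by
    rw [Polynomial.isCoprime_iff_aeval_ne_zero_of_isAlgClosed K L]
    obtain ⟨a, ha⟩ := IsAlgClosed.exists_aeval_eq_zero L (dehomogenize c) (by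
      rw [Polynomial.degree_eq_natDegree (by rintro h; simp [h] at hdeg; omega), hdeg]
      exact_mod_cast hj.ne')
    have := hz a 1 (by simp) (by rwa [eval_map_eq_aeval_dehomogenize])
    rw [eval_map_eq_aeval_dehomogenize] at this
    exact fun h => (h a).elim (· ha) (· this)
  obtain ⟨z, hzu, hz0, hzc, hze⟩ : ∃ z ∈ nonunits (Polynomial K), z ≠ 0 ∧
      z ∣ dehomogenize c ∧ z ∣ dehomogenize e := by
    by_contra! H
    exact hncop (EuclideanDomain.isCoprime_of_dvd
      (fun h => hc0 ((dehomogenize_eq_zero_iff hc).mp h.1)) fun z hz hz0 hzc => H z hz hz0 hzc)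
  exact ⟨z.homogenize z.natDegree, z.natDegree, Polynomial.natDegree_pos_iff_degree_pos.mpr
      (Polynomial.degree_pos_of_ne_zero_of_nonunit hz0 hzu),
    Polynomial.isHomogeneous_homogenize _, homogenize_dvd_of_dvd_dehomogenize hc hzc,
    homogenize_dvd_of_dvd_dehomogenize he hze⟩

theorem eq_zero_of_forall_eval_map_eq_zero {L : Type*} [Field L] [Infinite L] [Algebra K L]
    {F : MvPolynomial (Fin 2) K} {n : ℕ} (hF : F.IsHomogeneous n)
    (hz : ∀ α β : L, (α, β) ≠ (0, 0) → eval ![α, β] (map (algebraMap K L) F) = 0) : F = 0 := by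
  rw [← dehomogenize_eq_zero_iff hF,
    ← Polynomial.map_eq_zero_iff (FaithfulSMul.algebraMap_injective K L)]
  refine Polynomial.funext fun z => ?_
  rw [Polynomial.eval_map_algebraMap, ← eval_map_eq_aeval_dehomogenize, hz z 1 (by simp),
    Polynomial.eval_zero]

theorem vanishesOnMultiples_of_mul_of_zeros {L M : Type*} [Field L] [IsAlgClosed L]
    [Algebra K L] [AddCommMonoid M] [Module K M] (ℓ : MvPolynomial (Fin 2) K →ₗ[K] M)
    {e g h : MvPolynomial (Fin 2) K} {l m k N : ℕ} (he : e.IsHomogeneous l) (he0 : e ≠ 0)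
    (hg : g.IsHomogeneous m) (hh : h.IsHomogeneous k) (hh0 : h ≠ 0)
    (hroots : ∀ α β : L, (α, β) ≠ (0, 0) → eval ![α, β] (map (algebraMap K L) h) = 0 →
      eval ![α, β] (map (algebraMap K L) e) = 0)
    (hN : N = l + m + k) (hbase : VanishesOnMultiples ℓ (g * h) N)
    (hpert : ∀ a : MvPolynomial (Fin 2) K, a.IsHomogeneous (m + k) → ℓ (e * a ^ 2) = 0 →
      VanishesOnMultiples ℓ a N) :
    VanishesOnMultiples ℓ g (k + N) := by
  -- peel off `h = δ * c` one common factor of `c` and `e` at a time, by induction on `deg c`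
  suffices H : ∀ j (δ c : MvPolynomial (Fin 2) K) i, δ * c = h → δ.IsHomogeneous i →
      c.IsHomogeneous j → i + j = k → VanishesOnMultiples ℓ (g * δ) (j + N) by
    simpa using H k 1 h 0 (one_mul h) (isHomogeneous_one _ _) hh (zero_add k)
  intro j
  induction j using Nat.strong_induction_on with
  | _ j IH =>
  intro δ c i hδc hδ hc hk
  have hc0 : c ≠ 0 := by rintro rfl; exact hh0 (by rw [← hδc, mul_zero])
  rcases Nat.eq_zero_or_pos j with rfl | hj
  · obtain ⟨r, rfl⟩ : ∃ r, c = C r :=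
      ⟨_, totalDegree_eq_zero_iff_eq_C.mp (Nat.le_zero.mp hc.totalDegree_le)⟩
    have hr : r ≠ 0 := by rintro rfl; exact hc0 C_0
    have := (hδc ▸ hbase).C_mul r⁻¹
    rwa [mul_comm (C r⁻¹), mul_assoc, mul_assoc, ← C_mul, mul_inv_cancel₀ hr, C_1, mul_one,
      ← zero_add N] at this
  obtain ⟨γ, r, hr, hγ, ⟨c₂, rfl⟩, ⟨f, rfl⟩⟩ := exists_isHomogeneous_dvd_dvd_of_zeros hc hj hc0 he
    fun α β hαβ hcz => hroots α β hαβ (by rw [← hδc, map_mul, map_mul, hcz, mul_zero])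
  obtain ⟨j', rfl, hc₂⟩ := hγ.exists_eq_add_of_mul hc hc0
  obtain ⟨l', rfl, hf⟩ := hγ.exists_eq_add_of_mul he he0
  have hIH := IH j' (by omega) (δ * γ) c₂ (i + r) (by rw [← hδc]; ring) (hδ.mul hγ) hc₂ (by omega)
  refine vanishesOnMultiples_add_of_forall_mul fun c' hc' => hpert _ ?_ ?_
  · rw [show m + k = m + i + (r + j') by omega]
    exact (hg.mul hδ).mul hc'
  · -- `e * (g * δ * c') ^ 2 = (g * (δ * γ)) * (f * g * δ * c' ^ 2)`
    have hs : (f * g * δ * c' ^ 2).IsHomogeneous (j' + N) := by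
      rw [show j' + N = l' + m + i + (r + j') * 2 by omega]
      exact ((hf.mul hg).mul hδ).mul (hc'.pow 2)
    rw [← hIH _ hs]
    ring_nf

end Field

end BinaryForm

theorem apply_mul_add_mul_eq_zero_of_hessian_nonneg {σ : Type*}
    (B : MvPolynomial σ ℝ →ₗ[ℝ] MvPolynomial σ ℝ →ₗ[ℝ] ℝ)
    {q u₁ u₂ v₁ v₂ w₁ w₂ : MvPolynomial σ ℝ} {d : ℕ}
    (hhess : ∀ v₁ v₂ : MvPolynomial σ ℝ, v₁.IsHomogeneous d → v₂.IsHomogeneous d →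
      0 ≤ B (v₁ ^ 2 + v₂ ^ 2) q + 2 * B (u₁ * v₁ + u₂ * v₂) (u₁ * v₁ + u₂ * v₂))
    (hv₁ : v₁.IsHomogeneous d) (hv₂ : v₂.IsHomogeneous d) (hw₁ : w₁.IsHomogeneous d)
    (hw₂ : w₂.IsHomogeneous d) (hker : u₁ * v₁ + u₂ * v₂ = 0)
    (hv : B (v₁ ^ 2 + v₂ ^ 2) q = 0) :
    B (v₁ * w₁ + v₂ * w₂) q = 0 := by
  have hquad : ∀ ε : ℝ, 0 ≤ (B (w₁ ^ 2 + w₂ ^ 2) q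
      + 2 * B (u₁ * w₁ + u₂ * w₂) (u₁ * w₁ + u₂ * w₂)) * (ε * ε)
      + 2 * B (v₁ * w₁ + v₂ * w₂) q * ε + 0 := fun ε => by
    have h := hhess (v₁ + ε • w₁) (v₂ + ε • w₂)
      (by simpa [smul_eq_C_mul] using hv₁.add (hw₁.C_mul ε))
      (by simpa [smul_eq_C_mul] using hv₂.add (hw₂.C_mul ε))
    have hsq : (v₁ + ε • w₁) ^ 2 + (v₂ + ε • w₂) ^ 2 = (v₁ ^ 2 + v₂ ^ 2)
        + (2 * ε) • (v₁ * w₁ + v₂ * w₂) + (ε * ε) • (w₁ ^ 2 + w₂ ^ 2) := by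
      simp only [smul_eq_C_mul, map_mul, map_ofNat]; ring
    have hlin : u₁ * (v₁ + ε • w₁) + u₂ * (v₂ + ε • w₂) = ε • (u₁ * w₁ + u₂ * w₂) := by
      simp only [smul_eq_C_mul]; linear_combination hker
    rw [hsq, hlin] at h
    simp only [map_add, map_smul, LinearMap.add_apply, LinearMap.smul_apply, smul_eq_mul]
      at h hv ⊢
    linarith
  have := discrim_le_zero hquad
  rw [discrim] at this
  nlinarith [sq_nonneg (B (v₁ * w₁ + v₂ * w₂) q)]

section SecondOrder

open BinaryForm

variable (B : MvPolynomial (Fin 2) ℝ →ₗ[ℝ] MvPolynomial (Fin 2) ℝ →ₗ[ℝ] ℝ)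
  {q u₁ u₂ u₁' u₂' G : MvPolynomial (Fin 2) ℝ} {n d : ℕ}

theorem vanishesOnMultiples_of_gradient_eq_zero
    (hgrad : ∀ v₁ v₂ : MvPolynomial (Fin 2) ℝ, v₁.IsHomogeneous d → v₂.IsHomogeneous d →
      B (u₁ * v₁ + u₂ * v₂) q = 0)
    (hu₁ : u₁ = u₁' * G) (hu₂ : u₂ = u₂' * G) (hu₁' : u₁'.IsHomogeneous n)
    (hu₂' : u₂'.IsHomogeneous n) (hcop : ∀ w, w ∣ u₁' → w ∣ u₂' → IsUnit w) (hnd : n ≤ d) :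
    VanishesOnMultiples (B.flip q) G (n + d) := by
  intro t ht
  obtain ⟨v₁, v₂, hv₁, hv₂, rfl⟩ := exists_mul_add_mul_eq hu₁' hu₂' hcop hnd ht
  rw [LinearMap.flip_apply, ← hgrad v₁ v₂ hv₁ hv₂, hu₁, hu₂]
  ring_nf

theorem vanishesOnMultiples_of_hessian_nonneg
    (hhess : ∀ v₁ v₂ : MvPolynomial (Fin 2) ℝ, v₁.IsHomogeneous d → v₂.IsHomogeneous d →
      0 ≤ B (v₁ ^ 2 + v₂ ^ 2) q + 2 * B (u₁ * v₁ + u₂ * v₂) (u₁ * v₁ + u₂ * v₂))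
    (hu₁ : u₁ = u₁' * G) (hu₂ : u₂ = u₂' * G) (hu₁' : u₁'.IsHomogeneous n)
    (hu₂' : u₂'.IsHomogeneous n) (hcop : ∀ w, w ∣ u₁' → w ∣ u₂' → IsUnit w)
    {a : MvPolynomial (Fin 2) ℝ} {j : ℕ} (ha : a.IsHomogeneous j) (hd : n + j = d)
    (hea : B ((u₁' ^ 2 + u₂' ^ 2) * a ^ 2) q = 0) :
    VanishesOnMultiples (B.flip q) a (n + d) := by
  intro s hs
  obtain ⟨w₁, w₂, hw₁, hw₂, rfl⟩ :=
    exists_mul_add_mul_eq hu₂' hu₁' (fun w h₂ h₁ => hcop w h₁ h₂) (by omega) hs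
  -- `(u₂' a, -u₁' a)` lies in the kernel of `v ↦ u₁ v₁ + u₂ v₂`
  have := apply_mul_add_mul_eq_zero_of_hessian_nonneg B hhess (hd ▸ hu₂'.mul ha)
    (hd ▸ hu₁'.mul ha).neg hw₁ hw₂.neg (by rw [hu₁, hu₂]; ring) (by rw [← hea]; ring_nf)
  rw [LinearMap.flip_apply, ← this]
  ring_nf

theorem vanishesOnMultiples_of_gradient_of_hessian {g h : MvPolynomial (Fin 2) ℝ} {m k : ℕ}
    (hg : g.IsHomogeneous m) (hh : h.IsHomogeneous k) (hu₁' : u₁'.IsHomogeneous n)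
    (hu₂' : u₂'.IsHomogeneous n) (hu₁def : u₁ = u₁' * g * h) (hu₂def : u₂ = u₂' * g * h)
    (hu₁ : u₁.IsHomogeneous d) (hu₂ : u₂.IsHomogeneous d)
    (hcop : ∀ w, w ∣ u₁' → w ∣ u₂' → IsUnit w)
    (hroots : ∀ α β : ℂ, (α, β) ≠ (0, 0) →
      eval ![α, β] (map (algebraMap ℝ ℂ) h) = 0 →
      eval ![α, β] (map (algebraMap ℝ ℂ) (u₁' ^ 2 + u₂' ^ 2)) = 0)
    (hgrad : ∀ v₁ v₂ : MvPolynomial (Fin 2) ℝ, v₁.IsHomogeneous d → v₂.IsHomogeneous d →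
      B (u₁ * v₁ + u₂ * v₂) q = 0)
    (hhess : ∀ v₁ v₂ : MvPolynomial (Fin 2) ℝ, v₁.IsHomogeneous d → v₂.IsHomogeneous d →
      0 ≤ B (v₁ ^ 2 + v₂ ^ 2) q + 2 * B (u₁ * v₁ + u₂ * v₂) (u₁ * v₁ + u₂ * v₂)) :
    VanishesOnMultiples (B.flip q) g (k + (n + d)) := by
  rcases eq_or_ne g 0 with rfl | hg0
  · intro t _
    simp
  have hu0 : ¬(u₁' = 0 ∧ u₂' = 0) := fun ⟨h₁, h₂⟩ =>
    not_isUnit_zero (hcop 0 (h₁ ▸ dvd_rfl) (h₂ ▸ dvd_rfl))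
  have he0 := sq_add_sq_ne_zero hu0
  have he := (hu₁'.pow 2).add (hu₂'.pow 2)
  have hh0 : h ≠ 0 := fun h0 => he0 <| eq_zero_of_forall_eval_map_eq_zero he
    fun α β hαβ => hroots α β hαβ (by simp [h0])
  have hd : n + m + k = d := by
    obtain ⟨u', u, hu', hu, hdef, hu'0⟩ : ∃ u' u : MvPolynomial (Fin 2) ℝ, u'.IsHomogeneous n ∧
        u.IsHomogeneous d ∧ u = u' * g * h ∧ u' ≠ 0 := by
      by_cases h₁ : u₁' = 0
      · exact ⟨u₂', u₂, hu₂', hu₂, hu₂def, fun h₂ => hu0 ⟨h₁, h₂⟩⟩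
      · exact ⟨u₁', u₁, hu₁', hu₁, hu₁def, h₁⟩
    exact ((hu'.mul hg).mul hh).inj_right (hdef ▸ hu) (mul_ne_zero (mul_ne_zero hu'0 hg0) hh0)
  have hG₁ : u₁ = u₁' * (g * h) := by rw [hu₁def, mul_assoc]
  have hG₂ : u₂ = u₂' * (g * h) := by rw [hu₂def, mul_assoc]
  exact vanishesOnMultiples_of_mul_of_zeros (B.flip q) he he0 hg hh hh0 hroots (by omega)
    (vanishesOnMultiples_of_gradient_eq_zero B hgrad hG₁ hG₂ hu₁' hu₂' hcop (by omega))
    fun a ha hea => vanishesOnMultiples_of_hessian_nonneg B hhess hG₁ hG₂ hu₁' hu₂' hcop ha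
      (by omega) hea

end SecondOrder

theorem general_case_second_order_sufficient_general
    (d m k : ℕ)
    (B : MvPolynomial (Fin 2) ℝ →ₗ[ℝ] MvPolynomial (Fin 2) ℝ →ₗ[ℝ] ℝ)
    (hpos : ∀ q : MvPolynomial (Fin 2) ℝ, q.IsHomogeneous (2 * d) → q ≠ 0 → 0 < B q q)
    (g h u₁' u₂' : MvPolynomial (Fin 2) ℝ)
    (hg : g.IsHomogeneous m) (hh : h.IsHomogeneous k)
    (hu₁' : u₁'.IsHomogeneous (d - m - k)) (hu₂' : u₂'.IsHomogeneous (d - m - k))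
    (u₁ u₂ : MvPolynomial (Fin 2) ℝ)
    (hu₁def : u₁ = u₁' * g * h) (hu₂def : u₂ = u₂' * g * h)
    (hu₁ : u₁.IsHomogeneous d) (hu₂ : u₂.IsHomogeneous d)
    (hcop : ∀ w : MvPolynomial (Fin 2) ℝ, w ∣ u₁' → w ∣ u₂' → IsUnit w)
    (hroots : ∀ α β : ℂ, (α, β) ≠ (0, 0) →
      eval ![α, β] (map (algebraMap ℝ ℂ) h) = 0 →
      eval ![α, β] (map (algebraMap ℝ ℂ) (u₁' ^ 2 + u₂' ^ 2)) = 0)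
    (p : MvPolynomial (Fin 2) ℝ)
    (hp : p.IsHomogeneous (2 * d))
    (hgrad : ∀ v₁ v₂ : MvPolynomial (Fin 2) ℝ, v₁.IsHomogeneous d → v₂.IsHomogeneous d →
      B (u₁ * v₁ + u₂ * v₂) (u₁ ^ 2 + u₂ ^ 2 - p) = 0)
    (hhess : ∀ v₁ v₂ : MvPolynomial (Fin 2) ℝ, v₁.IsHomogeneous d → v₂.IsHomogeneous d →
      0 ≤ B (v₁ ^ 2 + v₂ ^ 2) (u₁ ^ 2 + u₂ ^ 2 - p)
        + 2 * B (u₁ * v₁ + u₂ * v₂) (u₁ * v₁ + u₂ * v₂))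
    (hmem : ∃ (v₁' v₂' : MvPolynomial (Fin 2) ℝ) (N : ℕ)
        (w₁ w₂ : Fin N → MvPolynomial (Fin 2) ℝ),
      v₁'.IsHomogeneous d ∧ v₂'.IsHomogeneous d ∧
      (∀ i, (w₁ i).IsHomogeneous d ∧ (w₂ i).IsHomogeneous d) ∧
      (∀ i, u₁ * w₁ i + u₂ * w₂ i = 0) ∧
      p = u₁' * g * (X 0 : MvPolynomial (Fin 2) ℝ) ^ k * v₁'
        + u₂' * g * (X 0 : MvPolynomial (Fin 2) ℝ) ^ k * v₂'
        + ∑ i, ((w₁ i) ^ 2 + (w₂ i) ^ 2)) :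
    u₁ ^ 2 + u₂ ^ 2 = p := by
  obtain ⟨v₁', v₂', N, w₁, w₂, hv₁', hv₂', hw, hker, hpeq⟩ := hmem
  obtain ⟨q, hq⟩ : ∃ q, q = u₁ ^ 2 + u₂ ^ 2 - p := ⟨_, rfl⟩
  rw [← hq] at hgrad hhess
  have hgt : B (g * (X 0 ^ k * (u₁' * v₁' + u₂' * v₂'))) q = 0 :=
    vanishesOnMultiples_of_gradient_of_hessian B hg hh hu₁' hu₂' hu₁def hu₂def hu₁ hu₂ hcop hroots
      hgrad hhess _ ((isHomogeneous_X_pow 0 k).mul ((hu₁'.mul hv₁').add (hu₂'.mul hv₂')))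
  have hBp : 0 ≤ B p q := by
    rw [hpeq, show u₁' * g * X 0 ^ k * v₁' + u₂' * g * X 0 ^ k * v₂'
        = g * (X 0 ^ k * (u₁' * v₁' + u₂' * v₂')) by ring,
      map_add, map_sum, LinearMap.add_apply, hgt, zero_add, LinearMap.sum_apply]
    exact Finset.sum_nonneg fun i _ => by
      simpa [hker i] using hhess (w₁ i) (w₂ i) (hw i).1 (hw i).2
  have hBq : B q q ≤ 0 := by
    have : B q q = B (u₁ * u₁ + u₂ * u₂) q - B p q := by
      rw [← LinearMap.sub_apply, ← map_sub, hq]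
      ring_nf
    linarith [hgrad u₁ u₂ hu₁ hu₂]
  have hq0 : q = 0 := by
    have hdeg : q.IsHomogeneous (2 * d) := by
      rw [hq, mul_comm]
      exact ((hu₁.pow 2).add (hu₂.pow 2)).sub (mul_comm 2 d ▸ hp)
    by_contra hne
    exact (hpos q hdeg hne).not_ge hBq
  rw [← sub_eq_zero, ← hq, hq0]

/-- General case (condition C3): with the decomposition `u₁ = u₁' g h`, `u₂ = u₂' g h`, if
`u` is a second-order critical point of `f_p` and
`p ∈ image(A_{u x₁ᵏ / h}) + cone(σ(ker A_u))`, then `u₁² + u₂² = p`. -/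
theorem general_case_second_order_sufficient
    (d m k : ℕ)
    (B : MvPolynomial (Fin 2) ℝ →ₗ[ℝ] MvPolynomial (Fin 2) ℝ →ₗ[ℝ] ℝ)
    (hsymm : ∀ a b : MvPolynomial (Fin 2) ℝ, B a b = B b a)
    (hpos : ∀ q : MvPolynomial (Fin 2) ℝ, q.IsHomogeneous (2 * d) → q ≠ 0 → 0 < B q q)
    (g h u₁' u₂' : MvPolynomial (Fin 2) ℝ)
    (hg : g.IsHomogeneous m) (hh : h.IsHomogeneous k)
    (hu₁' : u₁'.IsHomogeneous (d - m - k)) (hu₂' : u₂'.IsHomogeneous (d - m - k))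
    (u₁ u₂ : MvPolynomial (Fin 2) ℝ)
    (hu₁def : u₁ = u₁' * g * h) (hu₂def : u₂ = u₂' * g * h)
    (hu₁ : u₁.IsHomogeneous d) (hu₂ : u₂.IsHomogeneous d)
    (hcop : ∀ w : MvPolynomial (Fin 2) ℝ, w ∣ u₁' → w ∣ u₂' → IsUnit w)
    (hcopg : ∀ w : MvPolynomial (Fin 2) ℝ, w ∣ g → w ∣ (u₁' ^ 2 + u₂' ^ 2) → IsUnit w)
    (hroots : ∀ α β : ℂ, (α, β) ≠ (0, 0) →
      eval ![α, β] (map (algebraMap ℝ ℂ) h) = 0 →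
      eval ![α, β] (map (algebraMap ℝ ℂ) (u₁' ^ 2 + u₂' ^ 2)) = 0)
    (p : MvPolynomial (Fin 2) ℝ)
    (hp : p.IsHomogeneous (2 * d))
    (hpsos : ∃ (N : ℕ) (t : Fin N → MvPolynomial (Fin 2) ℝ),
      (∀ i, (t i).IsHomogeneous d) ∧ p = ∑ i, (t i) ^ 2)
    (hgrad : ∀ v₁ v₂ : MvPolynomial (Fin 2) ℝ, v₁.IsHomogeneous d → v₂.IsHomogeneous d →
      B (u₁ * v₁ + u₂ * v₂) (u₁ ^ 2 + u₂ ^ 2 - p) = 0)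
    (hhess : ∀ v₁ v₂ : MvPolynomial (Fin 2) ℝ, v₁.IsHomogeneous d → v₂.IsHomogeneous d →
      0 ≤ B (v₁ ^ 2 + v₂ ^ 2) (u₁ ^ 2 + u₂ ^ 2 - p)
        + 2 * B (u₁ * v₁ + u₂ * v₂) (u₁ * v₁ + u₂ * v₂))
    (hmem : ∃ (v₁' v₂' : MvPolynomial (Fin 2) ℝ) (N : ℕ)
        (w₁ w₂ : Fin N → MvPolynomial (Fin 2) ℝ),
      v₁'.IsHomogeneous d ∧ v₂'.IsHomogeneous d ∧
      (∀ i, (w₁ i).IsHomogeneous d ∧ (w₂ i).IsHomogeneous d) ∧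
      (∀ i, u₁ * w₁ i + u₂ * w₂ i = 0) ∧
      p = u₁' * g * (X 0 : MvPolynomial (Fin 2) ℝ) ^ k * v₁'
        + u₂' * g * (X 0 : MvPolynomial (Fin 2) ℝ) ^ k * v₂'
        + ∑ i, ((w₁ i) ^ 2 + (w₂ i) ^ 2)) :
    u₁ ^ 2 + u₂ ^ 2 = p :=
  general_case_second_order_sufficient_general d m k B hpos g h u₁' u₂' hg hh hu₁' hu₂' u₁ u₂ hu₁def
    hu₂def hu₁ hu₂ hcop hroots p hp hgrad hhess hmem
end
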